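/- arXiv:0808.3486 — 4 statements merged into one kernel-verified Lean document; each statement's English description precedes it below -/
import Mathlib

section
/- Euler's pentagonal-type identity for the Dedekind eta function: exp(πiτ/12)·∏_{k=1}^∞ (1 - exp(2kπiτ)) = exp(πiτ/12)·Σ_{k∈ℤ} (-1)^k exp((3k²+k)πiτ), i.e., ∏_{k=1}^∞ (1 - q^{2k}) = Σ_{k∈ℤ} (-1)^k q^{3k²+k} with q = exp(πiτ), for all τ in the upper half-plane. -/
/-!
In any Hausdorff topological ring the pentagonal number theorem
`∏ (1 - xⁿ⁺¹) = ∑ₖ (-1)ᵏ (x^{k(3k+1)/2} - x^{(k+1)(3k+2)/2})`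
follows by telescoping the series `Aₖ = ∑ₙ x^{(k+1)n} ∏_{i ≤ n} (1 - x^{k+i+1})`
(`Pentagonal.tprod_one_sub_pow`), as soon as these series, the products and the right-hand side
converge and the remainders `± x^{(k+1)(3k+4)/2} Aₖ` tend to `0`. For `‖x‖ < 1` all of this
follows from geometric bounds, because every finite product `∏ (1 - x^{k+i+1})` has norm at most
`exp (1 / (1 - ‖x‖))`. The eta identity is the case `x = e^{2πiτ}`, since
`3k² + k = 2 · pentagonal (-k)`.
-/

open Complex Real

theorem Finset.norm_prod_one_sub_le_exp {ι R : Type*} [NormedCommRing R] [NormOneClass R]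
    (t : Finset ι) (f : ι → R) :
    ‖∏ i ∈ t, (1 - f i)‖ ≤ Real.exp (∑ i ∈ t, ‖f i‖) := by
  have h := t.norm_prod_one_add_sub_one_le (-f ·)
  simp only [norm_neg, ← sub_eq_add_neg] at h
  have hle := norm_le_norm_sub_add (∏ i ∈ t, (1 - f i)) 1
  rw [norm_one] at hle
  linarith

theorem natAbs_le_pentagonal (k : ℤ) : k.natAbs ≤ pentagonal k := by
  have h := two_mul_natCast_pentagonal k
  zify
  rcases abs_cases k with ⟨hk, -⟩ | ⟨hk, -⟩ <;> rw [hk] <;> nlinarith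

section NormedCommRing

variable {R : Type*} [NormedCommRing R] [NormOneClass R] {x : R}

theorem norm_pow_le_norm_pow_of_le (hx : ‖x‖ ≤ 1) {m n : ℕ} (h : m ≤ n) :
    ‖x ^ n‖ ≤ ‖x‖ ^ m :=
  (norm_pow_le x n).trans (pow_le_pow_of_le_one (norm_nonneg x) hx h)

theorem norm_prod_one_sub_pow_le (hx : ‖x‖ < 1) (k m : ℕ) :
    ‖∏ i ∈ Finset.range m, (1 - x ^ (k + i + 1))‖ ≤ Real.exp (1 - ‖x‖)⁻¹ := by
  have hgeom := summable_geometric_of_lt_one (norm_nonneg x) hx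
  refine (Finset.norm_prod_one_sub_le_exp _ _).trans (Real.exp_le_exp.mpr ?_)
  rw [← tsum_geometric_of_lt_one (norm_nonneg x) hx]
  refine (Finset.sum_le_sum fun i _ => ?_).trans (hgeom.sum_le_tsum _ fun i _ => by positivity)
  exact norm_pow_le_norm_pow_of_le hx.le (by omega)

theorem norm_pow_mul_prod_one_sub_pow_le (hx : ‖x‖ < 1) (k n : ℕ) :
    ‖x ^ ((k + 1) * n) * ∏ i ∈ Finset.range (n + 1), (1 - x ^ (k + i + 1))‖ ≤
      Real.exp (1 - ‖x‖)⁻¹ * ‖x‖ ^ n := by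
  rw [mul_comm _ (‖x‖ ^ n)]
  refine (norm_mul_le _ _).trans (mul_le_mul ?_ (norm_prod_one_sub_pow_le hx k _)
    (norm_nonneg _) (by positivity))
  exact norm_pow_le_norm_pow_of_le hx.le (by nlinarith)

theorem norm_tsum_pow_mul_prod_one_sub_pow_le (hx : ‖x‖ < 1) (k : ℕ) :
    ‖∑' n, x ^ ((k + 1) * n) * ∏ i ∈ Finset.range (n + 1), (1 - x ^ (k + i + 1))‖ ≤
      Real.exp (1 - ‖x‖)⁻¹ * (1 - ‖x‖)⁻¹ :=
  tsum_of_norm_bounded ((hasSum_geometric_of_lt_one (norm_nonneg x) hx).mul_left _)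
    (norm_pow_mul_prod_one_sub_pow_le hx k)

variable [CompleteSpace R]

theorem summable_pow_mul_prod_one_sub_pow (hx : ‖x‖ < 1) (k : ℕ) :
    Summable fun n ↦ x ^ ((k + 1) * n) * ∏ i ∈ Finset.range (n + 1), (1 - x ^ (k + i + 1)) :=
  .of_norm_bounded ((summable_geometric_of_lt_one (norm_nonneg x) hx).mul_left _)
    (norm_pow_mul_prod_one_sub_pow_le hx k)

theorem multipliable_one_sub_pow_add (hx : ‖x‖ < 1) (k : ℕ) :
    Multipliable fun n ↦ 1 - x ^ (n + k + 1) := by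
  simp_rw [sub_eq_add_neg]
  refine multipliable_one_add_of_summable
    (.of_nonneg_of_le (fun _ => norm_nonneg _) (fun n => ?_)
      (summable_geometric_of_lt_one (norm_nonneg x) hx))
  rw [norm_neg]
  exact norm_pow_le_norm_pow_of_le hx.le (by omega)

theorem tprod_one_sub_pow_eq_tsum_pentagonal_nat (hx : ‖x‖ < 1) :
    ∏' n, (1 - x ^ (n + 1)) =
      ∑' k : ℕ, (-1) ^ k * (x ^ pentagonal (-k) - x ^ pentagonal (k + 1)) := by
  have hsign (k : ℕ) : ‖(-1 : R) ^ k‖ ≤ 1 := by simpa using norm_pow_le (-1 : R) k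
  refine Pentagonal.tprod_one_sub_pow (tendsto_pow_atTop_nhds_zero_of_norm_lt_one hx)
    (summable_pow_mul_prod_one_sub_pow hx) (multipliable_one_sub_pow_add hx) ?_ ?_
  · refine .of_norm_bounded ((summable_geometric_of_lt_one (norm_nonneg x) hx).mul_left 2)
      fun k => ?_
    have ha : k ≤ pentagonal (-k) := by simpa using natAbs_le_pentagonal (-k)
    have hb : k ≤ pentagonal (k + 1) := by
      have := natAbs_le_pentagonal (k + 1); omega
    calc ‖(-1) ^ k * (x ^ pentagonal (-k) - x ^ pentagonal (k + 1))‖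
        ≤ 1 * (‖x ^ pentagonal (-k)‖ + ‖x ^ pentagonal (k + 1)‖) :=
          (norm_mul_le _ _).trans
            (mul_le_mul (hsign k) (norm_sub_le _ _) (norm_nonneg _) zero_le_one)
      _ ≤ 1 * (‖x‖ ^ k + ‖x‖ ^ k) := by
          gcongr <;> exact norm_pow_le_norm_pow_of_le hx.le ‹_›
      _ = 2 * ‖x‖ ^ k := by ring
  · refine squeeze_zero_norm (fun k => ?_)
      (((tendsto_pow_atTop_nhds_zero_of_lt_one (norm_nonneg x) hx).mul_const
        (Real.exp (1 - ‖x‖)⁻¹ * (1 - ‖x‖)⁻¹)).trans (by rw [zero_mul]))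
    have he : k ≤ (k + 1) * (3 * k + 4) / 2 := by
      rw [Nat.le_div_iff_mul_le two_pos]; nlinarith
    refine (norm_mul_le _ _).trans (mul_le_mul ?_ (norm_tsum_pow_mul_prod_one_sub_pow_le hx k)
      (norm_nonneg _) (by positivity))
    calc ‖(-1) ^ (k + 1) * x ^ ((k + 1) * (3 * k + 4) / 2)‖
        ≤ 1 * ‖x‖ ^ k :=
          (norm_mul_le _ _).trans (mul_le_mul (hsign _) (norm_pow_le_norm_pow_of_le hx.le he)
            (norm_nonneg _) zero_le_one)
      _ = ‖x‖ ^ k := one_mul _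

end NormedCommRing

theorem tprod_one_sub_pow_eq_tsum_zpow_pentagonal_neg {𝕜 : Type*} [NormedField 𝕜]
    [CompleteSpace 𝕜] {x : 𝕜} (hx : ‖x‖ < 1) :
    ∏' n, (1 - x ^ (n + 1)) = ∑' k : ℤ, (-1) ^ k * x ^ pentagonal (-k) := by
  have hsum : Summable fun k : ℤ ↦ (-1) ^ k * x ^ pentagonal (-k) := by
    refine .of_norm_bounded ((summable_geometric_of_lt_one (norm_nonneg x) hx).comp_injective
      (pentagonal_injective.comp neg_injective)) fun k => ?_
    simp [norm_zpow]
  rw [← tsum_nat_add_neg_add_one hsum, tprod_one_sub_pow_eq_tsum_pentagonal_nat hx]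
  congr 1 with k
  rw [neg_neg, ← inv_zpow', inv_neg_one, zpow_add_one₀ (by norm_num), zpow_natCast]
  ring

/-- Euler's pentagonal-type identity for the Dedekind eta function:
`e^{πiτ/12} ∏_{k≥1} (1 - e^{2kπiτ}) = e^{πiτ/12} Σ_{k∈ℤ} (-1)^k e^{(3k²+k)πiτ}`. -/
theorem euler_pentagonal_eta (τ : ℂ) (hτ : 0 < τ.im) :
    Complex.exp ((π : ℂ) * I * τ / 12) *
        ∏' k : ℕ, (1 - Complex.exp (2 * ((k : ℂ) + 1) * (π : ℂ) * I * τ)) =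
      Complex.exp ((π : ℂ) * I * τ / 12) *
        ∑' k : ℤ, (-1 : ℂ) ^ k * Complex.exp ((3 * (k : ℂ) ^ 2 + (k : ℂ)) * (π : ℂ) * I * τ) := by
  set x := Complex.exp (2 * π * I * τ)
  have hx : ‖x‖ < 1 := UpperHalfPlane.norm_exp_two_pi_I_lt_one ⟨τ, hτ⟩
  have hprod (k : ℕ) : Complex.exp (2 * ((k : ℂ) + 1) * π * I * τ) = x ^ (k + 1) := by
    rw [← Complex.exp_nat_mul]
    congr 1
    push_cast
    ring
  have hsum (k : ℤ) :
      Complex.exp ((3 * (k : ℂ) ^ 2 + k) * π * I * τ) = x ^ pentagonal (-k) := by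
    have h : 2 * (pentagonal (-k) : ℂ) = k * (3 * k + 1) := by
      exact_mod_cast two_mul_natCast_pentagonal_neg k
    rw [← Complex.exp_nat_mul]
    congr 1
    linear_combination -(π * I * τ) * h
  simp_rw [hprod, hsum, tprod_one_sub_pow_eq_tsum_zpow_pentagonal_neg hx]
end

section
/- Jacobi's quartic theta-constant identity: θ₃(0|τ)⁴ = θ₂(0|τ)⁴ + θ₄(0|τ)⁴ for all τ in the upper half-plane. -/
open Complex Real

/-- The odd Jacobi theta function `θ₁`. -/
noncomputable def theta1 (x τ : ℂ) : ℂ :=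
  -I * ∑' k : ℤ, (-1 : ℂ) ^ k * Complex.exp (((k : ℂ) + 1 / 2) ^ 2 * (π : ℂ) * I * τ) *
    Complex.exp ((2 * (k : ℂ) + 1) * (π : ℂ) * I * x)

/-- The Jacobi theta function `θ₂`. -/
noncomputable def theta2 (x τ : ℂ) : ℂ :=
  ∑' k : ℤ, Complex.exp (((k : ℂ) + 1 / 2) ^ 2 * (π : ℂ) * I * τ) *
    Complex.exp ((2 * (k : ℂ) + 1) * (π : ℂ) * I * x)

/-- The Jacobi theta function `θ₃`. -/
noncomputable def theta3 (x τ : ℂ) : ℂ :=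
  ∑' k : ℤ, Complex.exp ((k : ℂ) ^ 2 * (π : ℂ) * I * τ) *
    Complex.exp (2 * (k : ℂ) * (π : ℂ) * I * x)

/-- The Jacobi theta function `θ₄`. -/
noncomputable def theta4 (x τ : ℂ) : ℂ :=
  ∑' k : ℤ, (-1 : ℂ) ^ k * Complex.exp ((k : ℂ) ^ 2 * (π : ℂ) * I * τ) *
    Complex.exp (2 * (k : ℂ) * (π : ℂ) * I * x)

/-!
The pairs `(m, n) ∈ ℤ²` of even, resp. odd, sum are `(r + s, r - s)`, resp. `(r + s + 1, r - s)`,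
and `(r + s + a)² + (r - s + b)² = 2(r + (a + b)/2)² + 2(s + (a - b)/2)²`. Splitting the double
series of a product of two theta constants this way (the sign `(-1)ᵐ⁺ⁿ` of `θ₄` is `±1` on the
two halves) gives the duplication formulas
`θ₃(τ)² = θ₃(2τ)² + θ₂(2τ)²`, `θ₄(τ)² = θ₃(2τ)² - θ₂(2τ)²`, `θ₂(τ)² = 2 θ₂(2τ) θ₃(2τ)`,
hence `θ₃⁴ - θ₄⁴ = 4 θ₃(2τ)² θ₂(2τ)² = θ₂⁴`.
-/

lemma range_add_sub_eq_setOf_even :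
    Set.range (fun q : ℤ × ℤ => (q.1 + q.2, q.1 - q.2)) = {p | Even (p.1 + p.2)} := by
  ext ⟨m, n⟩
  simp only [Set.mem_range, Set.mem_ofPred_eq, Prod.ext_iff, Prod.exists]
  constructor
  · rintro ⟨r, s, rfl, rfl⟩
    exact ⟨r, by ring⟩
  · rintro ⟨r, hr⟩
    exact ⟨r, m - r, by omega, by omega⟩

lemma range_add_add_one_sub_eq_compl_setOf_even :
    Set.range (fun q : ℤ × ℤ => (q.1 + q.2 + 1, q.1 - q.2)) = {p | Even (p.1 + p.2)}ᶜ := by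
  ext ⟨m, n⟩
  simp only [Set.mem_range, Set.mem_compl_iff, Set.mem_ofPred_eq, Int.not_even_iff_odd,
    Prod.ext_iff, Prod.exists]
  constructor
  · rintro ⟨r, s, rfl, rfl⟩
    exact ⟨r, by ring⟩
  · rintro ⟨r, hr⟩
    exact ⟨r, m - r - 1, by omega, by omega⟩

theorem tsum_int_prod_eq_tsum_add_sub_add_tsum_add_add_one_sub {α : Type*} [AddCommGroup α]
    [UniformSpace α] [IsUniformAddGroup α] [CompleteSpace α] [T2Space α] {f : ℤ × ℤ → α}
    (hf : Summable f) :
    ∑' p, f p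
      = ∑' q : ℤ × ℤ, f (q.1 + q.2, q.1 - q.2) + ∑' q : ℤ × ℤ, f (q.1 + q.2 + 1, q.1 - q.2) := by
  have heven : Function.Injective (fun q : ℤ × ℤ => (q.1 + q.2, q.1 - q.2)) := by
    intro q q' h
    simp only [Prod.ext_iff] at h ⊢
    omega
  have hodd : Function.Injective (fun q : ℤ × ℤ => (q.1 + q.2 + 1, q.1 - q.2)) := by
    intro q q' h
    simp only [Prod.ext_iff] at h ⊢
    omega
  rw [← tsum_range f heven, ← tsum_range f hodd, range_add_sub_eq_setOf_even,
    range_add_add_one_sub_eq_compl_setOf_even]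
  exact (hf.tsum_subtype_add_tsum_subtype_compl _).symm

theorem tsum_mul_tsum_eq_tsum_add_sub_add_tsum_add_add_one_sub {R : Type*} [NormedRing R]
    [CompleteSpace R] {u v : ℤ → R} (hu : Summable (‖u ·‖)) (hv : Summable (‖v ·‖)) :
    (∑' k, u k) * (∑' k, v k) = ∑' q : ℤ × ℤ, u (q.1 + q.2) * v (q.1 - q.2)
      + ∑' q : ℤ × ℤ, u (q.1 + q.2 + 1) * v (q.1 - q.2) :=
  (tsum_mul_tsum_of_summable_norm hu hv).trans <|
    tsum_int_prod_eq_tsum_add_sub_add_tsum_add_add_one_sub (f := fun p => u p.1 * v p.2)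
      (summable_mul_of_summable_norm hu hv)

noncomputable def thetaNull (ε a τ : ℂ) : ℂ :=
  ∑' k : ℤ, ε ^ k * cexp (((k : ℂ) + a) ^ 2 * π * I * τ)

lemma theta3_zero (τ : ℂ) : theta3 0 τ = thetaNull 1 0 τ := by
  simp [theta3, thetaNull]

lemma theta4_zero (τ : ℂ) : theta4 0 τ = thetaNull (-1) 0 τ := by
  simp [theta4, thetaNull]

lemma theta2_zero (τ : ℂ) : theta2 0 τ = thetaNull 1 (1 / 2) τ := by
  simp [theta2, thetaNull]

lemma thetaNull_one_add_one (a τ : ℂ) : thetaNull 1 (a + 1) τ = thetaNull 1 a τ := by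
  simp only [thetaNull, one_zpow, one_mul]
  rw [← (Equiv.addRight (1 : ℤ)).tsum_eq fun k : ℤ => cexp (((k : ℂ) + a) ^ 2 * π * I * τ)]
  refine tsum_congr fun k => ?_
  rw [Equiv.coe_addRight]
  push_cast
  ring_nf

lemma summable_cexp_sq {τ : ℂ} (hτ : 0 < τ.im) (a : ℂ) :
    Summable fun k : ℤ => cexp (((k : ℂ) + a) ^ 2 * π * I * τ) := by
  refine (((summable_jacobiTheta₂_term_iff (a * τ) τ).mpr hτ).mul_left
    (cexp (a ^ 2 * π * I * τ))).congr fun k => ?_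
  rw [jacobiTheta₂_term, ← Complex.exp_add]
  congr 1
  ring

theorem thetaNull_mul_thetaNull {ε τ : ℂ} (hε : ε ^ 2 = 1) (hτ : 0 < τ.im) (a b : ℂ) :
    thetaNull ε a τ * thetaNull ε b τ
      = thetaNull 1 ((a + b) / 2) (2 * τ) * thetaNull 1 ((a - b) / 2) (2 * τ)
        + ε * (thetaNull 1 ((a + b + 1) / 2) (2 * τ) * thetaNull 1 ((a - b + 1) / 2) (2 * τ)) := by
  have hnorm : ‖ε‖ = 1 := by
    rw [← pow_eq_one_iff_of_nonneg (norm_nonneg ε) two_ne_zero, ← norm_pow, hε, norm_one]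
  have hε0 : ε ≠ 0 := norm_ne_zero_iff.mp (hnorm ▸ one_ne_zero)
  have hsign (r s : ℤ) : ε ^ (r + s) * ε ^ (r - s) = 1 := by
    rw [← zpow_add₀ hε0, show r + s + (r - s) = 2 * r by ring, zpow_mul]
    simp [hε]
  have hsign' (r s : ℤ) : ε ^ (r + s + 1) * ε ^ (r - s) = ε := by
    rw [zpow_add_one₀ hε0, mul_right_comm, hsign, one_mul]
  have hu (c : ℂ) : Summable fun k : ℤ => ‖ε ^ k * cexp (((k : ℂ) + c) ^ 2 * π * I * τ)‖ := by
    simpa [norm_zpow, hnorm] using (summable_cexp_sq hτ c).norm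
  have h2τ : 0 < (2 * τ).im := by simpa using hτ
  simp only [thetaNull, one_zpow, one_mul]
  rw [tsum_mul_tsum_eq_tsum_add_sub_add_tsum_add_add_one_sub (hu a) (hu b),
    tsum_mul_tsum_of_summable_norm (summable_cexp_sq h2τ _).norm (summable_cexp_sq h2τ _).norm,
    tsum_mul_tsum_of_summable_norm (summable_cexp_sq h2τ _).norm (summable_cexp_sq h2τ _).norm,
    ← tsum_mul_left]
  congr 1 <;> refine tsum_congr fun q => ?_
  · rw [mul_mul_mul_comm, hsign, one_mul, ← Complex.exp_add, ← Complex.exp_add]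
    congr 1
    push_cast
    ring
  · rw [mul_mul_mul_comm, hsign', ← Complex.exp_add, ← Complex.exp_add]
    congr 2
    push_cast
    ring

/-- Jacobi's quartic identity: `θ₃(0|τ)⁴ = θ₂(0|τ)⁴ + θ₄(0|τ)⁴`. -/
theorem jacobi_quartic_identity (τ : ℂ) (hτ : 0 < τ.im) :
    theta3 0 τ ^ 4 = theta2 0 τ ^ 4 + theta4 0 τ ^ 4 := by
  have h3 := thetaNull_mul_thetaNull (one_pow 2) hτ 0 0
  have h4 := thetaNull_mul_thetaNull neg_one_sq hτ 0 0
  have h2 := thetaNull_mul_thetaNull (one_pow 2) hτ (1 / 2) (1 / 2)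
  have h1 : thetaNull 1 1 (2 * τ) = thetaNull 1 0 (2 * τ) := by
    simpa using thetaNull_one_add_one 0 (2 * τ)
  norm_num [h1] at h3 h4 h2
  rw [theta3_zero, theta2_zero, theta4_zero]
  set A := thetaNull 1 0 (2 * τ)
  set B := thetaNull 1 (1 / 2) (2 * τ)
  linear_combination (thetaNull 1 0 τ ^ 2 + A ^ 2 + B ^ 2) * h3
    - (thetaNull (-1) 0 τ ^ 2 + A ^ 2 - B ^ 2) * h4 - (thetaNull 1 (1 / 2) τ ^ 2 + 2 * A * B) * h2
end

section
/- The theta function θ₃ satisfies the duplication relation θ₃(2x|τ)·θ₃(0|τ)³ = θ₂(x|τ)⁴ + θ₄(x|τ)⁴ for all x ∈ ℂ and all τ in the upper half-plane. -/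
open Complex Real

/-!
Expanding the fourth powers, the three sides become sums of `exp (π i τ ‖v‖² + 2π i x ∑ vᵢ)` over
vectors `v ∈ (½ℤ)⁴`: the left side over the image of `ℤ⁴` under the orthogonal involution `H / 2`
(`H` the 4 × 4 Hadamard matrix), `θ₄⁴` over `ℤ⁴` with sign `(-1)^(∑ vᵢ)`, and `θ₂⁴` over
`½ • 1 + ℤ⁴`. Split each lattice by the parity of the coordinate sum of its integral parameter.
`H / 2` maps the even part of `ℤ⁴` onto itself and the odd part onto the even part of `½ • 1 + ℤ⁴`.
The reflection `v ↦ (∑ vᵢ / 2) • 1 - v` preserves `‖v‖²` and `∑ vᵢ` and carries the odd part of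
`½ • 1 + ℤ⁴` onto the odd part of `ℤ⁴`, where `θ₄⁴` has sign `-1`, so these terms cancel.
-/

namespace ThetaDuplication

theorem hasSum_mul_four_of_summable_norm {R ι : Type*} [NormedRing R] [CompleteSpace R]
    {f₁ f₂ f₃ f₄ : ι → R} (h₁ : Summable (‖f₁ ·‖)) (h₂ : Summable (‖f₂ ·‖))
    (h₃ : Summable (‖f₃ ·‖)) (h₄ : Summable (‖f₄ ·‖)) :
    HasSum (fun p : ι × ι × ι × ι => f₁ p.1 * (f₂ p.2.1 * (f₃ p.2.2.1 * f₄ p.2.2.2)))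
      ((∑' k, f₁ k) * ((∑' k, f₂ k) * ((∑' k, f₃ k) * ∑' k, f₄ k))) := by
  have h₃₄ := h₃.mul_norm h₄
  have h₂₃₄ := h₂.mul_norm h₃₄
  rw [tsum_mul_tsum_of_summable_norm h₃ h₄, tsum_mul_tsum_of_summable_norm h₂ h₃₄,
    tsum_mul_tsum_of_summable_norm h₁ h₂₃₄]
  exact (h₁.mul_norm h₂₃₄).of_norm.hasSum

-- The summands of `theta2`, `theta3`, `theta4`: e.g. `theta2 x τ = ∑' k, theta2Term x τ k` is `rfl`.
noncomputable def theta2Term (x τ : ℂ) (k : ℤ) : ℂ :=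
  cexp (((k : ℂ) + 1 / 2) ^ 2 * π * I * τ) * cexp ((2 * (k : ℂ) + 1) * π * I * x)

noncomputable def theta3Term (x τ : ℂ) (k : ℤ) : ℂ :=
  cexp ((k : ℂ) ^ 2 * π * I * τ) * cexp (2 * (k : ℂ) * π * I * x)

noncomputable def theta4Term (x τ : ℂ) (k : ℤ) : ℂ :=
  (-1 : ℂ) ^ k * cexp ((k : ℂ) ^ 2 * π * I * τ) * cexp (2 * (k : ℂ) * π * I * x)

lemma neg_one_zpow_eq_exp (k : ℤ) : (-1 : ℂ) ^ k = cexp (k * (π * I)) := by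
  rw [Complex.exp_int_mul, Complex.exp_pi_mul_I]

lemma theta2Term_eq_jacobiTheta₂_term (x τ : ℂ) (k : ℤ) :
    theta2Term x τ k = cexp (π * I * τ / 4 + π * I * x) * jacobiTheta₂_term k (x + τ / 2) τ := by
  simp only [theta2Term, jacobiTheta₂_term, ← Complex.exp_add]
  congr 1
  ring

lemma theta3Term_eq_jacobiTheta₂_term (x τ : ℂ) (k : ℤ) :
    theta3Term x τ k = jacobiTheta₂_term k x τ := by
  simp only [theta3Term, jacobiTheta₂_term, ← Complex.exp_add]
  congr 1
  ring

lemma theta4Term_eq_jacobiTheta₂_term (x τ : ℂ) (k : ℤ) :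
    theta4Term x τ k = jacobiTheta₂_term k (x + 1 / 2) τ := by
  simp only [theta4Term, jacobiTheta₂_term, neg_one_zpow_eq_exp, ← Complex.exp_add]
  congr 1
  ring

section Summability

variable {τ : ℂ}

lemma summable_norm_jacobiTheta₂_term (z : ℂ) (hτ : 0 < τ.im) :
    Summable fun n : ℤ => ‖jacobiTheta₂_term n z τ‖ :=
  summable_norm_iff.mpr ((summable_jacobiTheta₂_term_iff z τ).mpr hτ)

lemma summable_norm_theta2Term (x : ℂ) (hτ : 0 < τ.im) : Summable fun k => ‖theta2Term x τ k‖ := by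
  simpa only [theta2Term_eq_jacobiTheta₂_term, norm_mul] using
    (summable_norm_jacobiTheta₂_term (x + τ / 2) hτ).mul_left _

lemma summable_norm_theta3Term (x : ℂ) (hτ : 0 < τ.im) : Summable fun k => ‖theta3Term x τ k‖ := by
  simpa only [theta3Term_eq_jacobiTheta₂_term] using summable_norm_jacobiTheta₂_term x hτ

lemma summable_norm_theta4Term (x : ℂ) (hτ : 0 < τ.im) : Summable fun k => ‖theta4Term x τ k‖ := by
  simpa only [theta4Term_eq_jacobiTheta₂_term] using summable_norm_jacobiTheta₂_term (x + 1 / 2) hτ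

end Summability

def coordSum : ℤ × ℤ × ℤ × ℤ → ℤ
  | (a, b, c, d) => a + b + c + d

def hadamard : ℤ × ℤ × ℤ × ℤ → ℤ × ℤ × ℤ × ℤ
  | (a, b, c, d) => (a + b + c + d, a + b - c - d, a - b + c - d, a - b - c + d)

/-- The summand `exp (π i τ ‖v‖² + 2π i x ∑ vᵢ)` at `v = w / 2`; working with `w` keeps all
index maps integral. -/
noncomputable def halfLatticeTerm (x τ : ℂ) : ℤ × ℤ × ℤ × ℤ → ℂ
  | (a, b, c, d) =>
    cexp (π * I * τ * (a ^ 2 + b ^ 2 + c ^ 2 + d ^ 2) / 4 + π * I * x * (a + b + c + d))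

lemma theta3Term_mul (x τ : ℂ) (a b c d : ℤ) :
    theta3Term (2 * x) τ a * (theta3Term 0 τ b * (theta3Term 0 τ c * theta3Term 0 τ d)) =
      halfLatticeTerm x τ (hadamard (a, b, c, d)) := by
  simp only [theta3Term, hadamard, halfLatticeTerm, ← Complex.exp_add]
  congr 1
  push_cast
  ring

lemma theta4Term_mul (x τ : ℂ) (a b c d : ℤ) :
    theta4Term x τ a * (theta4Term x τ b * (theta4Term x τ c * theta4Term x τ d)) =
      (-1) ^ coordSum (a, b, c, d) * halfLatticeTerm x τ (2 • (a, b, c, d)) := by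
  simp only [theta4Term, coordSum, halfLatticeTerm, Prod.smul_mk, nsmul_eq_mul,
    neg_one_zpow_eq_exp, ← Complex.exp_add]
  congr 1
  push_cast
  ring

lemma theta2Term_mul (x τ : ℂ) (a b c d : ℤ) :
    theta2Term x τ a * (theta2Term x τ b * (theta2Term x τ c * theta2Term x τ d)) =
      halfLatticeTerm x τ (2 • (a, b, c, d) + 1) := by
  simp only [theta2Term, halfLatticeTerm, Prod.smul_mk, nsmul_eq_mul, ← Prod.mk_one_one,
    ← Complex.exp_add]
  congr 1
  push_cast
  ring

lemma halfLatticeTerm_reflect (x τ : ℂ) (t : ℤ) (w : ℤ × ℤ × ℤ × ℤ) (h : 2 * t = coordSum w) :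
    halfLatticeTerm x τ (t • 1 - w) = halfLatticeTerm x τ w := by
  obtain ⟨a, b, c, d⟩ := w
  have h' : (2 * t : ℂ) = a + b + c + d := by exact_mod_cast h
  simp only [halfLatticeTerm, Prod.smul_mk, smul_eq_mul, ← Prod.mk_one_one, Prod.mk_sub_mk,
    mul_one]
  congr 1
  push_cast
  linear_combination (π * I * τ * t / 2 + 2 * π * I * x) * h'

def evenSum : Set (ℤ × ℤ × ℤ × ℤ) := {p | Even (coordSum p)}

lemma mem_evenSum_iff (a b c d : ℤ) : (a, b, c, d) ∈ evenSum ↔ (a + b + c + d) % 2 = 0 :=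
  Int.even_iff

lemma mem_evenSum_compl_iff (a b c d : ℤ) :
    (a, b, c, d) ∈ evenSumᶜ ↔ (a + b + c + d) % 2 = 1 :=
  Int.not_even_iff

def halfHadamardEquiv : evenSum ≃ evenSum where
  toFun := fun ⟨(a, b, c, d), h⟩ =>
    ⟨((a + b + c + d) / 2, (a + b - c - d) / 2, (a - b + c - d) / 2, (a - b - c + d) / 2), by
      rw [mem_evenSum_iff] at h ⊢; omega⟩
  invFun := fun ⟨(a, b, c, d), h⟩ =>
    ⟨((a + b + c + d) / 2, (a + b - c - d) / 2, (a - b + c - d) / 2, (a - b - c + d) / 2), by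
      rw [mem_evenSum_iff] at h ⊢; omega⟩
  left_inv := fun ⟨(a, b, c, d), h⟩ => by
    rw [mem_evenSum_iff] at h; ext <;> dsimp only <;> omega
  right_inv := fun ⟨(a, b, c, d), h⟩ => by
    rw [mem_evenSum_iff] at h; ext <;> dsimp only <;> omega

def halfHadamardShiftEquiv : evenSum ≃ ↥evenSumᶜ where
  toFun := fun ⟨(a, b, c, d), h⟩ =>
    ⟨((a + b + c + d) / 2 + 1, (a + b - c - d) / 2, (a - b + c - d) / 2, (a - b - c + d) / 2), by
      rw [mem_evenSum_iff] at h; rw [mem_evenSum_compl_iff]; omega⟩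
  invFun := fun ⟨(a, b, c, d), h⟩ =>
    ⟨((a + b + c + d - 1) / 2, (a + b - c - d - 1) / 2, (a - b + c - d - 1) / 2,
      (a - b - c + d - 1) / 2), by rw [mem_evenSum_compl_iff] at h; rw [mem_evenSum_iff]; omega⟩
  left_inv := fun ⟨(a, b, c, d), h⟩ => by
    rw [mem_evenSum_iff] at h; ext <;> dsimp only <;> omega
  right_inv := fun ⟨(a, b, c, d), h⟩ => by
    rw [mem_evenSum_compl_iff] at h; ext <;> dsimp only <;> omega

def oddSumReflectEquiv : ↥evenSumᶜ ≃ ↥evenSumᶜ where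
  toFun := fun ⟨(a, b, c, d), h⟩ =>
    let s := (a + b + c + d + 1) / 2
    ⟨(s - a, s - b, s - c, s - d), by rw [mem_evenSum_compl_iff] at h ⊢; omega⟩
  invFun := fun ⟨(a, b, c, d), h⟩ =>
    let s := (a + b + c + d - 1) / 2
    ⟨(s - a, s - b, s - c, s - d), by rw [mem_evenSum_compl_iff] at h ⊢; omega⟩
  left_inv := fun ⟨(a, b, c, d), h⟩ => by
    rw [mem_evenSum_compl_iff] at h; ext <;> dsimp only <;> omega
  right_inv := fun ⟨(a, b, c, d), h⟩ => by
    rw [mem_evenSum_compl_iff] at h; ext <;> dsimp only <;> omega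

lemma hadamard_halfHadamardEquiv (m : evenSum) :
    hadamard (halfHadamardEquiv m) = 2 • (m : ℤ × ℤ × ℤ × ℤ) := by
  obtain ⟨⟨a, b, c, d⟩, h⟩ := m
  rw [mem_evenSum_iff] at h
  simp only [halfHadamardEquiv, Equiv.coe_fn_mk, hadamard, Prod.smul_mk, nsmul_eq_mul,
    Prod.mk.injEq]
  omega

lemma hadamard_halfHadamardShiftEquiv (k : evenSum) :
    hadamard (halfHadamardShiftEquiv k) = 2 • (k : ℤ × ℤ × ℤ × ℤ) + 1 := by
  obtain ⟨⟨a, b, c, d⟩, h⟩ := k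
  rw [mem_evenSum_iff] at h
  simp only [halfHadamardShiftEquiv, Equiv.coe_fn_mk, hadamard, Prod.smul_mk, nsmul_eq_mul,
    ← Prod.mk_one_one, Prod.mk_add_mk, Prod.mk.injEq]
  omega

lemma two_nsmul_oddSumReflectEquiv (k : ↥evenSumᶜ) :
    2 • (oddSumReflectEquiv k : ℤ × ℤ × ℤ × ℤ) =
      (coordSum k + 2) • 1 - (2 • (k : ℤ × ℤ × ℤ × ℤ) + 1) := by
  obtain ⟨⟨a, b, c, d⟩, h⟩ := k
  rw [mem_evenSum_compl_iff] at h
  simp only [oddSumReflectEquiv, Equiv.coe_fn_mk, coordSum, Prod.smul_mk, nsmul_eq_mul,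
    smul_eq_mul, ← Prod.mk_one_one, Prod.mk_add_mk, Prod.mk_sub_mk, Prod.mk.injEq]
  omega

lemma odd_coordSum_oddSumReflectEquiv (k : ↥evenSumᶜ) :
    Odd (coordSum (oddSumReflectEquiv k)) := by
  obtain ⟨⟨a, b, c, d⟩, h⟩ := k
  rw [mem_evenSum_compl_iff] at h
  simp only [oddSumReflectEquiv, Equiv.coe_fn_mk, coordSum, Int.odd_iff]
  omega

theorem tsum_comp_hadamard {K : Type*} [NormedDivisionRing K] [CompleteSpace K]
    {G : ℤ × ℤ × ℤ × ℤ → K} (hG : ∀ (t : ℤ) w, 2 * t = coordSum w → G (t • 1 - w) = G w)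
    (h₃ : Summable fun n => G (hadamard n))
    (h₄ : Summable fun m => (-1) ^ coordSum m * G (2 • m))
    (h₂ : Summable fun k => G (2 • k + 1)) :
    ∑' n, G (hadamard n) = ∑' m, (-1) ^ coordSum m * G (2 • m) + ∑' k, G (2 • k + 1) := by
  have even_part : ∑' n : evenSum, G (hadamard n) =
      ∑' m : evenSum, (-1) ^ coordSum m * G (2 • (m : ℤ × ℤ × ℤ × ℤ)) := by
    rw [← halfHadamardEquiv.tsum_eq]
    exact tsum_congr fun m => by
      rw [hadamard_halfHadamardEquiv, Even.neg_one_zpow m.2, one_mul]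
  have odd_part : ∑' n : ↥evenSumᶜ, G (hadamard n) =
      ∑' k : evenSum, G (2 • (k : ℤ × ℤ × ℤ × ℤ) + 1) := by
    rw [← halfHadamardShiftEquiv.tsum_eq]
    exact tsum_congr fun k => by rw [hadamard_halfHadamardShiftEquiv]
  have cancel : ∑' m : ↥evenSumᶜ, (-1) ^ coordSum m * G (2 • (m : ℤ × ℤ × ℤ × ℤ)) =
      -∑' k : ↥evenSumᶜ, G (2 • (k : ℤ × ℤ × ℤ × ℤ) + 1) := by
    rw [← oddSumReflectEquiv.tsum_eq, ← tsum_neg]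
    refine tsum_congr fun k => ?_
    rw [(odd_coordSum_oddSumReflectEquiv k).neg_one_zpow, neg_one_mul,
      two_nsmul_oddSumReflectEquiv, hG]
    obtain ⟨⟨a, b, c, d⟩, -⟩ := k
    simp only [coordSum, Prod.smul_mk, nsmul_eq_mul, ← Prod.mk_one_one]
    ring
  rw [← h₃.tsum_subtype_add_tsum_subtype_compl evenSum,
    ← h₄.tsum_subtype_add_tsum_subtype_compl evenSum,
    ← h₂.tsum_subtype_add_tsum_subtype_compl evenSum, even_part, odd_part, cancel]
  abel

section HasSum

variable (x : ℂ) {τ : ℂ}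

lemma hasSum_theta3_mul_theta3_zero_pow_three (hτ : 0 < τ.im) :
    HasSum (fun n => halfLatticeTerm x τ (hadamard n)) (theta3 (2 * x) τ * theta3 0 τ ^ 3) := by
  have h₀ := summable_norm_theta3Term 0 hτ
  rw [pow_three]
  exact (hasSum_mul_four_of_summable_norm (summable_norm_theta3Term (2 * x) hτ) h₀ h₀ h₀).congr_fun
    fun ⟨a, b, c, d⟩ => (theta3Term_mul x τ a b c d).symm

lemma hasSum_theta4_pow_four (hτ : 0 < τ.im) :
    HasSum (fun m => (-1) ^ coordSum m * halfLatticeTerm x τ (2 • m)) (theta4 x τ ^ 4) := by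
  have h := summable_norm_theta4Term x hτ
  rw [show theta4 x τ ^ 4 = theta4 x τ * (theta4 x τ * (theta4 x τ * theta4 x τ)) by ring]
  exact (hasSum_mul_four_of_summable_norm h h h h).congr_fun
    fun ⟨a, b, c, d⟩ => (theta4Term_mul x τ a b c d).symm

lemma hasSum_theta2_pow_four (hτ : 0 < τ.im) :
    HasSum (fun k => halfLatticeTerm x τ (2 • k + 1)) (theta2 x τ ^ 4) := by
  have h := summable_norm_theta2Term x hτ
  rw [show theta2 x τ ^ 4 = theta2 x τ * (theta2 x τ * (theta2 x τ * theta2 x τ)) by ring]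
  exact (hasSum_mul_four_of_summable_norm h h h h).congr_fun
    fun ⟨a, b, c, d⟩ => (theta2Term_mul x τ a b c d).symm

end HasSum

end ThetaDuplication

open ThetaDuplication in
/-- Duplication relation for `θ₃`: `θ₃(2x|τ)·θ₃(0|τ)³ = θ₂(x|τ)⁴ + θ₄(x|τ)⁴`. -/
theorem theta3_duplication (x τ : ℂ) (hτ : 0 < τ.im) :
    theta3 (2 * x) τ * theta3 0 τ ^ 3 = theta2 x τ ^ 4 + theta4 x τ ^ 4 := by
  have h₃ := hasSum_theta3_mul_theta3_zero_pow_three x hτ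
  have h₄ := hasSum_theta4_pow_four x hτ
  have h₂ := hasSum_theta2_pow_four x hτ
  rw [← h₃.tsum_eq, ← h₄.tsum_eq, ← h₂.tsum_eq, add_comm]
  exact tsum_comp_hadamard (halfLatticeTerm_reflect x τ) h₃.summable h₄.summable h₂.summable
end

section
/- The quarter-period theta values satisfy θ₄(1/4|τ) = θ₃(1/4|τ) and θ₂(1/4|τ) = θ₁(1/4|τ), and moreover 2·θ₃(1/4|τ)⁴ = θ₄(0|τ)·θ₃(0|τ)³ + θ₃(0|τ)·θ₄(0|τ)³ and 2·θ₁(1/4|τ)⁴ = θ₄(0|τ)·θ₃(0|τ)³ − θ₃(0|τ)·θ₄(0|τ)³, for all τ in the upper half-plane. -/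
open Complex Real

/-!
Multiplying two theta series and regrouping the double sum over `(j, l)` by the parity of
`j + l`, with `j = m + n` or `j = m + n + 1` and `l = m - n`, gives the duplication formulas
`θ₃(z₁|τ) θ₃(z₂|τ) = θ₃(z₁+z₂|2τ) θ₃(z₁-z₂|2τ) + θ₂(z₁+z₂|2τ) θ₂(z₁-z₂|2τ)` and its analogue for
`θ₂ θ₂`. Evaluated at `z₁, z₂ ∈ {0, 1/4, 1/2}`, where `θ₂(1/2|·) = 0`, they express
`θ₃(0)²`, `θ₄(0)²`, `θ₃(0) θ₄(0)`, `θ₃(1/4)²` and `θ₂(1/4)²` through `a = θ₃(0|2τ)`,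
`b = θ₂(0|2τ)` and `c = θ₄(0|2τ)`; for instance `θ₃(1/4)⁴ = c² a² = θ₃ θ₄ (θ₃² + θ₄²) / 2`.
The two linear relations come from the symmetries `k ↦ -k` and `k ↦ -1 - k` of the series.
-/

def Int.sumSubEquiv : (ℤ × ℤ) ⊕ (ℤ × ℤ) ≃ ℤ × ℤ where
  toFun := Sum.elim (fun p ↦ (p.1 + p.2, p.1 - p.2)) (fun p ↦ (p.1 + p.2 + 1, p.1 - p.2))
  invFun p := if (p.1 + p.2) % 2 = 0 then .inl ((p.1 + p.2) / 2, (p.1 - p.2) / 2)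
    else .inr ((p.1 + p.2 - 1) / 2, (p.1 - p.2 - 1) / 2)
  left_inv := by
    rintro (⟨m, n⟩ | ⟨m, n⟩)
    · dsimp only [Sum.elim_inl]
      rw [if_pos (by omega), Sum.inl.injEq, Prod.mk.injEq]
      omega
    · dsimp only [Sum.elim_inr]
      rw [if_neg (by omega), Sum.inr.injEq, Prod.mk.injEq]
      omega
  right_inv := by
    rintro ⟨j, l⟩
    dsimp only
    split_ifs
    · simp only [Sum.elim_inl, Prod.mk.injEq]
      omega
    · simp only [Sum.elim_inr, Prod.mk.injEq]
      omega

theorem tsum_mul_tsum_eq_tsum_add_sub {R : Type*} [NormedRing R] [CompleteSpace R] {f g : ℤ → R}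
    (hf : Summable (‖f ·‖)) (hg : Summable (‖g ·‖)) :
    (∑' j, f j) * ∑' l, g l =
      ∑' p : ℤ × ℤ, f (p.1 + p.2) * g (p.1 - p.2) +
        ∑' p : ℤ × ℤ, f (p.1 + p.2 + 1) * g (p.1 - p.2) := by
  have hfg := Int.sumSubEquiv.summable_iff.mpr (summable_mul_of_summable_norm hf hg)
  rw [tsum_mul_tsum_of_summable_norm hf hg, ← Int.sumSubEquiv.tsum_eq]
  exact Summable.tsum_sum (hfg.comp_injective Sum.inl_injective)
    (hfg.comp_injective Sum.inr_injective)

noncomputable def theta3Term (x τ : ℂ) (k : ℤ) : ℂ :=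
  cexp ((k : ℂ) ^ 2 * π * I * τ) * cexp (2 * k * π * I * x)

noncomputable def theta2Term (x τ : ℂ) (k : ℤ) : ℂ :=
  cexp (((k : ℂ) + 1 / 2) ^ 2 * π * I * τ) * cexp ((2 * k + 1) * π * I * x)

theorem theta3_eq_tsum (x τ : ℂ) : theta3 x τ = ∑' k, theta3Term x τ k := rfl

theorem theta2_eq_tsum (x τ : ℂ) : theta2 x τ = ∑' k, theta2Term x τ k := rfl

theorem theta3Term_eq_jacobiTheta₂_term (x τ : ℂ) (k : ℤ) :
    theta3Term x τ k = jacobiTheta₂_term k x τ := by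
  rw [theta3Term, jacobiTheta₂_term, ← Complex.exp_add]
  ring_nf

theorem theta2Term_eq_mul_jacobiTheta₂_term (x τ : ℂ) (k : ℤ) :
    theta2Term x τ k = cexp (π * I * τ / 4 + π * I * x) * jacobiTheta₂_term k (x + τ / 2) τ := by
  rw [theta2Term, jacobiTheta₂_term, ← Complex.exp_add, ← Complex.exp_add]
  ring_nf

theorem theta3_eq_jacobiTheta₂ (x τ : ℂ) : theta3 x τ = jacobiTheta₂ x τ :=
  tsum_congr (theta3Term_eq_jacobiTheta₂_term x τ)

theorem summable_norm_theta3Term (x : ℂ) {τ : ℂ} (hτ : 0 < τ.im) :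
    Summable (‖theta3Term x τ ·‖) := by
  simp_rw [theta3Term_eq_jacobiTheta₂_term]
  exact summable_norm_iff.mpr ((summable_jacobiTheta₂_term_iff x τ).mpr hτ)

theorem summable_norm_theta2Term (x : ℂ) {τ : ℂ} (hτ : 0 < τ.im) :
    Summable (‖theta2Term x τ ·‖) := by
  simp_rw [theta2Term_eq_mul_jacobiTheta₂_term]
  exact summable_norm_iff.mpr (((summable_jacobiTheta₂_term_iff _ τ).mpr hτ).mul_left _)

section TermProducts

variable (z₁ z₂ τ : ℂ) (m n : ℤ)

theorem theta3Term_add_mul_theta3Term_sub :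
    theta3Term z₁ τ (m + n) * theta3Term z₂ τ (m - n) =
      theta3Term (z₁ + z₂) (2 * τ) m * theta3Term (z₁ - z₂) (2 * τ) n := by
  simp only [theta3Term, ← Complex.exp_add]
  congr 1
  push_cast
  ring

theorem theta3Term_add_add_one_mul_theta3Term_sub :
    theta3Term z₁ τ (m + n + 1) * theta3Term z₂ τ (m - n) =
      theta2Term (z₁ + z₂) (2 * τ) m * theta2Term (z₁ - z₂) (2 * τ) n := by
  simp only [theta3Term, theta2Term, ← Complex.exp_add]
  congr 1
  push_cast
  ring

theorem theta2Term_add_mul_theta2Term_sub :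
    theta2Term z₁ τ (m + n) * theta2Term z₂ τ (m - n) =
      theta2Term (z₁ + z₂) (2 * τ) m * theta3Term (z₁ - z₂) (2 * τ) n := by
  simp only [theta3Term, theta2Term, ← Complex.exp_add]
  congr 1
  push_cast
  ring

theorem theta2Term_add_add_one_mul_theta2Term_sub :
    theta2Term z₁ τ (m + n + 1) * theta2Term z₂ τ (m - n) =
      theta3Term (z₁ + z₂) (2 * τ) (m + 1) * theta2Term (z₁ - z₂) (2 * τ) n := by
  simp only [theta3Term, theta2Term, ← Complex.exp_add]
  congr 1
  push_cast
  ring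

end TermProducts

theorem theta3_mul_theta3 (z₁ z₂ : ℂ) {τ : ℂ} (hτ : 0 < τ.im) :
    theta3 z₁ τ * theta3 z₂ τ =
      theta3 (z₁ + z₂) (2 * τ) * theta3 (z₁ - z₂) (2 * τ) +
        theta2 (z₁ + z₂) (2 * τ) * theta2 (z₁ - z₂) (2 * τ) := by
  have h2τ : 0 < (2 * τ).im := by simpa using hτ
  simp only [theta3_eq_tsum, theta2_eq_tsum]
  rw [tsum_mul_tsum_eq_tsum_add_sub (summable_norm_theta3Term z₁ hτ)
    (summable_norm_theta3Term z₂ hτ)]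
  simp only [theta3Term_add_mul_theta3Term_sub, theta3Term_add_add_one_mul_theta3Term_sub]
  rw [tsum_mul_tsum_of_summable_norm (summable_norm_theta3Term _ h2τ)
      (summable_norm_theta3Term _ h2τ),
    tsum_mul_tsum_of_summable_norm (summable_norm_theta2Term _ h2τ)
      (summable_norm_theta2Term _ h2τ)]

theorem theta2_mul_theta2 (z₁ z₂ : ℂ) {τ : ℂ} (hτ : 0 < τ.im) :
    theta2 z₁ τ * theta2 z₂ τ =
      theta2 (z₁ + z₂) (2 * τ) * theta3 (z₁ - z₂) (2 * τ) +
        theta3 (z₁ + z₂) (2 * τ) * theta2 (z₁ - z₂) (2 * τ) := by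
  have h2τ : 0 < (2 * τ).im := by simpa using hτ
  simp only [theta3_eq_tsum, theta2_eq_tsum]
  rw [tsum_mul_tsum_eq_tsum_add_sub (summable_norm_theta2Term z₁ hτ)
    (summable_norm_theta2Term z₂ hτ)]
  simp only [theta2Term_add_mul_theta2Term_sub, theta2Term_add_add_one_mul_theta2Term_sub]
  rw [tsum_mul_tsum_of_summable_norm (summable_norm_theta2Term _ h2τ)
      (summable_norm_theta3Term _ h2τ),
    ← (Equiv.addRight (1 : ℤ)).tsum_eq (theta3Term (z₁ + z₂) (2 * τ)), Equiv.coe_addRight,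
    tsum_mul_tsum_of_summable_norm
      ((summable_norm_theta3Term _ h2τ).comp_injective (add_left_injective 1))
      (summable_norm_theta2Term _ h2τ)]

theorem neg_one_zpow_eq_exp (k : ℤ) : (-1 : ℂ) ^ k = cexp (k * (π * I)) := by
  rw [Complex.exp_int_mul, Complex.exp_pi_mul_I]

theorem theta3_neg (x τ : ℂ) : theta3 (-x) τ = theta3 x τ := by
  simp only [theta3_eq_jacobiTheta₂, jacobiTheta₂_neg_left]

theorem theta3_add_one (x τ : ℂ) : theta3 (x + 1) τ = theta3 x τ := by
  simp only [theta3_eq_jacobiTheta₂, jacobiTheta₂_add_left]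

theorem theta2_neg (x τ : ℂ) : theta2 (-x) τ = theta2 x τ := by
  rw [theta2_eq_tsum, theta2_eq_tsum, ← (Equiv.subLeft (-1 : ℤ)).tsum_eq]
  refine tsum_congr fun k ↦ ?_
  simp only [theta2Term, Equiv.subLeft_apply]
  congr 2 <;> push_cast <;> ring

theorem theta2_add_one (x τ : ℂ) : theta2 (x + 1) τ = -theta2 x τ := by
  rw [theta2_eq_tsum, theta2_eq_tsum, ← tsum_neg]
  refine tsum_congr fun k ↦ ?_
  rw [theta2Term, theta2Term,
    show (2 * k + 1) * π * I * (x + 1) = (2 * k + 1) * π * I * x + (π * I + k * (2 * π * I)) by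
      ring,
    Complex.exp_add, Complex.exp_add, Complex.exp_pi_mul_I, Complex.exp_int_mul_two_pi_mul_I]
  ring

theorem theta2_half (τ : ℂ) : theta2 (1 / 2) τ = 0 := by
  have h := theta2_add_one (-(1 / 2)) τ
  rw [theta2_neg, show -(1 / 2) + 1 = (1 / 2 : ℂ) by norm_num] at h
  exact self_eq_neg.mp h

theorem theta4_eq_theta3 (x τ : ℂ) : theta4 x τ = theta3 (x + 1 / 2) τ := by
  refine tsum_congr fun k ↦ ?_
  rw [show 2 * k * π * I * (x + 1 / 2) = 2 * k * π * I * x + k * (π * I) by ring,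
    Complex.exp_add, ← neg_one_zpow_eq_exp]
  ring

theorem theta1_eq_neg_theta2 (x τ : ℂ) : theta1 x τ = -theta2 (x + 1 / 2) τ := by
  rw [theta1, theta2, ← tsum_mul_left, ← tsum_neg]
  refine tsum_congr fun k ↦ ?_
  rw [show (2 * k + 1) * π * I * (x + 1 / 2) = (2 * k + 1) * π * I * x + (k * (π * I) + π / 2 * I)
      by ring,
    Complex.exp_add, Complex.exp_add, ← neg_one_zpow_eq_exp, Complex.exp_pi_div_two_mul_I]
  ring

theorem theta4_quarter (τ : ℂ) : theta4 (1 / 4) τ = theta3 (1 / 4) τ := by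
  rw [theta4_eq_theta3, show (1 / 4 + 1 / 2 : ℂ) = -(1 / 4) + 1 by norm_num, theta3_add_one,
    theta3_neg]

theorem theta1_quarter (τ : ℂ) : theta1 (1 / 4) τ = theta2 (1 / 4) τ := by
  rw [theta1_eq_neg_theta2, show (1 / 4 + 1 / 2 : ℂ) = -(1 / 4) + 1 by norm_num, theta2_add_one,
    theta2_neg, neg_neg]

theorem theta3_zero_sq {τ : ℂ} (hτ : 0 < τ.im) :
    theta3 0 τ ^ 2 = theta3 0 (2 * τ) ^ 2 + theta2 0 (2 * τ) ^ 2 := by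
  simpa [sq] using theta3_mul_theta3 0 0 hτ

theorem theta4_zero_sq {τ : ℂ} (hτ : 0 < τ.im) :
    theta4 0 τ ^ 2 = theta3 0 (2 * τ) ^ 2 - theta2 0 (2 * τ) ^ 2 := by
  have h := theta3_mul_theta3 (1 / 2) (1 / 2) hτ
  rw [show (1 / 2 + 1 / 2 : ℂ) = 0 + 1 by norm_num, sub_self, theta3_add_one,
    theta2_add_one] at h
  rw [theta4_eq_theta3, zero_add, sq, h]
  ring

theorem theta3_zero_mul_theta4_zero {τ : ℂ} (hτ : 0 < τ.im) :
    theta3 0 τ * theta4 0 τ = theta4 0 (2 * τ) ^ 2 := by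
  have h := theta3_mul_theta3 0 (1 / 2) hτ
  rw [zero_add, zero_sub, theta3_neg, theta2_half, zero_mul, add_zero] at h
  rw [theta4_eq_theta3, theta4_eq_theta3, zero_add, sq, h]

theorem theta3_quarter_sq {τ : ℂ} (hτ : 0 < τ.im) :
    theta3 (1 / 4) τ ^ 2 = theta4 0 (2 * τ) * theta3 0 (2 * τ) := by
  have h := theta3_mul_theta3 (1 / 4) (1 / 4) hτ
  rw [show (1 / 4 + 1 / 4 : ℂ) = 1 / 2 by norm_num, sub_self, theta2_half, zero_mul,
    add_zero] at h
  rw [theta4_eq_theta3, zero_add, sq, h]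

theorem theta2_quarter_sq {τ : ℂ} (hτ : 0 < τ.im) :
    theta2 (1 / 4) τ ^ 2 = theta4 0 (2 * τ) * theta2 0 (2 * τ) := by
  have h := theta2_mul_theta2 (1 / 4) (1 / 4) hτ
  rw [show (1 / 4 + 1 / 4 : ℂ) = 1 / 2 by norm_num, sub_self, theta2_half, zero_mul,
    zero_add] at h
  rw [theta4_eq_theta3, zero_add, sq, h]

/-- Quarter-period theta values: `θ₄(1/4|τ) = θ₃(1/4|τ)`, `θ₂(1/4|τ) = θ₁(1/4|τ)`,
`2θ₃(1/4|τ)⁴ = θ₄(0|τ)θ₃(0|τ)³ + θ₃(0|τ)θ₄(0|τ)³` and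
`2θ₁(1/4|τ)⁴ = θ₄(0|τ)θ₃(0|τ)³ − θ₃(0|τ)θ₄(0|τ)³`. -/
theorem quarter_period_theta (τ : ℂ) (hτ : 0 < τ.im) :
    theta4 (1 / 4) τ = theta3 (1 / 4) τ ∧
      theta2 (1 / 4) τ = theta1 (1 / 4) τ ∧
      2 * theta3 (1 / 4) τ ^ 4 = theta4 0 τ * theta3 0 τ ^ 3 + theta3 0 τ * theta4 0 τ ^ 3 ∧
      2 * theta1 (1 / 4) τ ^ 4 = theta4 0 τ * theta3 0 τ ^ 3 - theta3 0 τ * theta4 0 τ ^ 3 := by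
  have h3 := theta3_zero_sq hτ
  have h4 := theta4_zero_sq hτ
  have h34 := theta3_zero_mul_theta4_zero hτ
  have h3q := theta3_quarter_sq hτ
  have h2q := theta2_quarter_sq hτ
  refine ⟨theta4_quarter τ, (theta1_quarter τ).symm, ?_, ?_⟩
  · linear_combination (2 * (theta3 (1 / 4) τ ^ 2 + theta4 0 (2 * τ) * theta3 0 (2 * τ))) * h3q
      - (theta3 0 τ ^ 2 + theta4 0 τ ^ 2) * h34 - theta4 0 (2 * τ) ^ 2 * h3
      - theta4 0 (2 * τ) ^ 2 * h4
  · rw [theta1_quarter]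
    linear_combination (2 * (theta2 (1 / 4) τ ^ 2 + theta4 0 (2 * τ) * theta2 0 (2 * τ))) * h2q
      - (theta3 0 τ ^ 2 - theta4 0 τ ^ 2) * h34 - theta4 0 (2 * τ) ^ 2 * h3
      + theta4 0 (2 * τ) ^ 2 * h4
end
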